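/- arXiv:2006.01107 — 2 statements merged into one kernel-verified Lean document; each statement's English description precedes it below -/
import Mathlib

section
/- Let (F_p)_{p≥0} be a filtration and let (Z_p)_{p≥1} be an (F_p)-adapted real process that is conditionally σ-subgaussian given (F_p). Let S_t = Σ_{p=1}^t Z_p. Then for any λ > 0 and any δ ∈ (0,1), with probability at least 1 − δ, simultaneously for all t ≥ 1: S_t < (1/λ)·log(1/δ) + λ t σ²/2. -/
/-!
With `c = l²σ²/2`, the conditional subgaussian bound says exactly that
`M t = exp (l S_t - t c)` is a nonnegative supermartingale with `M 0 = 1`. By Ville's maximal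
inequality, the probability that `M t ≥ 1/δ` for some `t` is at most `δ`, and
`S_t ≥ (1/l) log (1/δ) + l t σ²/2` is the same event as `M t ≥ 1/δ`.
-/

open MeasureTheory Real Finset
open Filter Topology

namespace MeasureTheory

variable {Ω : Type*} {m m0 : MeasurableSpace Ω} {μ : Measure Ω}

lemma integrable_of_tendsto_of_integral_norm_le {E : Type*} [NormedAddCommGroup E]
    {f : ℕ → Ω → E} {F : Ω → E} {B : ℝ}
    (hf : ∀ n, Integrable (f n) μ) (hfF : ∀ᵐ ω ∂μ, Tendsto (fun n => f n ω) atTop (𝓝 (F ω)))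
    (hB : ∀ n, ∫ ω, ‖f n ω‖ ∂μ ≤ B) :
    Integrable F μ := by
  refine ⟨aestronglyMeasurable_of_tendsto_ae _ (fun n => (hf n).1) hfF, ?_⟩
  have hfatou : ∫⁻ ω, ‖F ω‖ₑ ∂μ ≤ liminf (fun n => ∫⁻ ω, ‖f n ω‖ₑ ∂μ) atTop :=
    lintegral_congr_ae (by filter_upwards [hfF] with ω hω using hω.enorm.liminf_eq) ▸
      lintegral_liminf_le' fun n => (hf n).1.enorm
  have hbound : ∀ n, ∫⁻ ω, ‖f n ω‖ₑ ∂μ ≤ ENNReal.ofReal B := fun n => by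
    rw [← ofReal_integral_norm_eq_lintegral_enorm (hf n)]
    exact ENNReal.ofReal_le_ofReal (hB n)
  exact hfatou.trans_lt <| (liminf_le_of_frequently_le' (Frequently.of_forall hbound)).trans_lt
    ENNReal.ofReal_lt_top

/-- Truncating `f` lets it be pulled out of the conditional expectation; Fatou's lemma then
removes the truncation. -/
lemma integrable_mul_of_condExp_le (hm : m ≤ m0) [SigmaFinite (μ.trim hm)] {f g : Ω → ℝ}
    (hf : StronglyMeasurable[m] f) (hfi : Integrable f μ) (hf0 : 0 ≤ f)
    (hgi : Integrable g μ) (hg0 : 0 ≤ g) {C : ℝ} (hC : μ[g|m] ≤ᵐ[μ] fun _ => C) :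
    Integrable (f * g) μ := by
  have hcond_bdd : ∀ᵐ ω ∂μ, ‖μ[g|m] ω‖ ≤ C := by
    filter_upwards [condExp_nonneg (m := m) (Eventually.of_forall hg0), hC] with ω h0 hC
    rwa [Real.norm_of_nonneg h0]
  have hfg : Integrable (f * μ[g|m]) μ :=
    hfi.mul_bdd integrable_condExp.aestronglyMeasurable hcond_bdd
  set fn : ℕ → Ω → ℝ := fun n ω => min (f ω) n
  have hfn_meas : ∀ n, StronglyMeasurable[m] (fn n) := fun n =>
    (continuous_id.min continuous_const).comp_stronglyMeasurable hf
  have hfn0 : ∀ n, 0 ≤ fn n := fun n ω => le_min (hf0 ω) n.cast_nonneg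
  have hfn_bdd : ∀ n, ∀ ω, ‖fn n ω‖ ≤ n := fun n ω => by
    rw [Real.norm_of_nonneg (hfn0 n ω)]; exact min_le_right _ _
  have hfn_int : ∀ n, Integrable (fn n * g) μ := fun n =>
    hgi.bdd_mul ((hfn_meas n).mono hm).aestronglyMeasurable (Eventually.of_forall (hfn_bdd n))
  refine integrable_of_tendsto_of_integral_norm_le hfn_int (B := ∫ ω, (f * μ[g|m]) ω ∂μ)
    (Eventually.of_forall fun ω => ?_) fun n => ?_
  · refine tendsto_const_nhds.congr' ?_
    filter_upwards [eventually_ge_atTop ⌈f ω⌉₊] with n hn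
    simp only [fn, Pi.mul_apply, min_eq_left ((Nat.le_ceil _).trans (Nat.cast_le.2 hn))]
  calc ∫ ω, ‖(fn n * g) ω‖ ∂μ
      = ∫ ω, (fn n * g) ω ∂μ := integral_congr_ae <| Eventually.of_forall fun ω =>
        Real.norm_of_nonneg (mul_nonneg (hfn0 n ω) (hg0 ω))
    _ = ∫ ω, μ[fn n * g|m] ω ∂μ := (integral_condExp hm).symm
    _ = ∫ ω, (fn n * μ[g|m]) ω ∂μ :=
        integral_congr_ae (condExp_mul_of_stronglyMeasurable_left (hfn_meas n) (hfn_int n) hgi)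
    _ ≤ ∫ ω, (f * μ[g|m]) ω ∂μ := by
        refine integral_mono_ae (integrable_condExp.bdd_mul
          ((hfn_meas n).mono hm).aestronglyMeasurable (Eventually.of_forall (hfn_bdd n))) hfg ?_
        filter_upwards [condExp_nonneg (m := m) (Eventually.of_forall hg0)] with ω hω
        exact mul_le_mul_of_nonneg_right (min_le_left _ _) hω

variable {𝓕 : Filtration ℕ m0}

theorem supermartingale_of_mul_condExp_le_one [IsFiniteMeasure μ] {M g : ℕ → Ω → ℝ}
    (hM : StronglyAdapted 𝓕 M) (hM0 : Integrable (M 0) μ) (hMnn : ∀ t, 0 ≤ M t)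
    (hMg : ∀ t, M (t + 1) = M t * g t) (hg : ∀ t, Integrable (g t) μ) (hgnn : ∀ t, 0 ≤ g t)
    (hcond : ∀ t, μ[g t|𝓕 t] ≤ᵐ[μ] fun _ => 1) :
    Supermartingale M 𝓕 μ := by
  have hMint : ∀ t, Integrable (M t) μ := by
    intro t
    induction t with
    | zero => exact hM0
    | succ t ih =>
      rw [hMg t]
      exact integrable_mul_of_condExp_le (𝓕.le t) (hM t) ih (hMnn t) (hg t) (hgnn t) (hcond t)
  refine supermartingale_nat hM hMint fun t => ?_
  rw [hMg t]
  filter_upwards [condExp_mul_of_stronglyMeasurable_left (hM t) (hMg t ▸ hMint (t + 1)) (hg t),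
    hcond t] with ω hmul hω
  rw [hmul]
  exact mul_le_of_le_one_right (hMnn t ω) hω

theorem Supermartingale.measure_exists_ge_before_le [IsFiniteMeasure μ] {M : ℕ → Ω → ℝ}
    (hM : Supermartingale M 𝓕 μ) (hMnn : ∀ t, 0 ≤ M t) {r : ℝ} (hr : 0 < r) (n : ℕ) :
    μ {ω | ∃ k ≤ n, r ≤ M k ω} ≤ ENNReal.ofReal ((∫ ω, M 0 ω ∂μ) / r) := by
  set τ : Ω → ℕ∞ := fun ω => (hittingBtwn M (Set.Ici r) 0 n ω : ℕ)
  have hτ : IsStoppingTime 𝓕 τ :=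
    hM.stronglyAdapted.adapted.isStoppingTime_hittingBtwn measurableSet_Ici
  have hτn : ∀ ω, τ ω ≤ n := fun ω => WithTop.coe_le_coe.2 (hittingBtwn_le ω)
  have hstop : ∫ ω, stoppedValue M τ ω ∂μ ≤ ∫ ω, M 0 ω ∂μ := by
    have := hM.neg.expected_stoppedValue_mono (isStoppingTime_const 𝓕 0) hτ
      (fun _ => zero_le) hτn
    simpa [stoppedValue, integral_neg] using this
  have hmarkov : r * μ.real {ω | r ≤ stoppedValue M τ ω} ≤ ∫ ω, stoppedValue M τ ω ∂μ :=
    mul_meas_ge_le_integral_of_nonneg (Eventually.of_forall fun ω => hMnn _ ω)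
      (integrable_stoppedValue ℕ hτ hM.integrable hτn) r
  calc μ {ω | ∃ k ≤ n, r ≤ M k ω}
      ≤ μ {ω | r ≤ stoppedValue M τ ω} := measure_mono fun ω ⟨k, hkn, hk⟩ =>
        stoppedValue_hittingBtwn_mem ⟨k, ⟨zero_le, hkn⟩, hk⟩
    _ = ENNReal.ofReal (μ.real {ω | r ≤ stoppedValue M τ ω}) := (ofReal_measureReal).symm
    _ ≤ ENNReal.ofReal ((∫ ω, M 0 ω ∂μ) / r) :=
        ENNReal.ofReal_le_ofReal ((le_div_iff₀' hr).2 (hmarkov.trans hstop))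

/-- Ville's maximal inequality. -/
theorem Supermartingale.measure_exists_ge_le [IsFiniteMeasure μ] {M : ℕ → Ω → ℝ}
    (hM : Supermartingale M 𝓕 μ) (hMnn : ∀ t, 0 ≤ M t) {r : ℝ} (hr : 0 < r) :
    μ {ω | ∃ k, r ≤ M k ω} ≤ ENNReal.ofReal ((∫ ω, M 0 ω ∂μ) / r) := by
  have hunion : {ω | ∃ k, r ≤ M k ω} = ⋃ n, {ω | ∃ k ≤ n, r ≤ M k ω} := by
    ext ω
    simp only [Set.mem_ofPred_eq, Set.mem_iUnion]
    exact ⟨fun ⟨k, hk⟩ => ⟨k, k, le_rfl, hk⟩, fun ⟨_, k, _, hk⟩ => ⟨k, hk⟩⟩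
  have hmono : Monotone fun n => {ω | ∃ k ≤ n, r ≤ M k ω} :=
    fun _ _ hab _ ⟨k, hk, hkr⟩ => ⟨k, hk.trans hab, hkr⟩
  rw [hunion, hmono.measure_iUnion]
  exact iSup_le (hM.measure_exists_ge_before_le hMnn hr)

lemma one_sub_le_prob_of_prob_compl_le [IsProbabilityMeasure μ] {s : Set Ω} {p : ENNReal}
    (h : μ sᶜ ≤ p) : 1 - p ≤ μ s := by
  rw [tsub_le_iff_right]
  calc 1 = μ Set.univ := measure_univ.symm
    _ ≤ μ s + μ sᶜ := Set.union_compl_self s ▸ measure_union_le s sᶜ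
    _ ≤ μ s + p := add_le_add_right h _

end MeasureTheory

section ExpProcess

variable {Ω : Type*} {m0 : MeasurableSpace Ω} {μ : Measure Ω} {𝓕 : Filtration ℕ m0}

noncomputable def expProcess (Z : ℕ → Ω → ℝ) (l c : ℝ) (t : ℕ) (ω : Ω) : ℝ :=
  exp (l * ∑ p ∈ Icc 1 t, Z p ω - t * c)

variable {Z : ℕ → Ω → ℝ} {l c : ℝ}

lemma expProcess_zero : expProcess Z l c 0 = 1 := by
  ext ω
  simp [expProcess]

lemma expProcess_succ (t : ℕ) :
    expProcess Z l c (t + 1) = expProcess Z l c t * fun ω => exp (l * Z (t + 1) ω - c) := by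
  ext ω
  simp only [expProcess, Pi.mul_apply, ← exp_add, sum_Icc_succ_top (Nat.le_add_left 1 t)]
  push_cast
  ring_nf

lemma stronglyAdapted_expProcess (hZ : Adapted 𝓕 Z) : StronglyAdapted 𝓕 (expProcess Z l c) :=
  fun _ => continuous_exp.comp_stronglyMeasurable <|
    ((Finset.stronglyMeasurable_fun_sum _ fun p hp =>
      (hZ p).stronglyMeasurable.mono (𝓕.mono (mem_Icc.1 hp).2)).const_mul l).sub
      stronglyMeasurable_const

theorem supermartingale_expProcess [IsFiniteMeasure μ] (hZ : Adapted 𝓕 Z)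
    (hint : ∀ t, Integrable (fun ω => exp (l * Z (t + 1) ω)) μ)
    (hcond : ∀ t, μ[fun ω => exp (l * Z (t + 1) ω)|𝓕 t] ≤ᵐ[μ] fun _ => exp c) :
    Supermartingale (expProcess Z l c) 𝓕 μ := by
  have hg : ∀ t, (fun ω => exp (l * Z (t + 1) ω - c)) =
      exp (-c) • fun ω => exp (l * Z (t + 1) ω) := fun t => by
    ext ω
    simp only [Pi.smul_apply, smul_eq_mul, ← exp_add]
    ring_nf
  refine supermartingale_of_mul_condExp_le_one (stronglyAdapted_expProcess hZ)
    (expProcess_zero (Z := Z) ▸ integrable_const 1) (fun t ω => (exp_pos _).le) expProcess_succ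
    (fun t => hg t ▸ (hint t).const_mul _) (fun t ω => (exp_pos _).le) fun t => ?_
  rw [hg t]
  filter_upwards [condExp_smul (exp (-c)) (fun ω => exp (l * Z (t + 1) ω)) (𝓕 t), hcond t]
    with ω hsmul hω
  rw [hsmul, Pi.smul_apply, smul_eq_mul]
  calc exp (-c) * μ[fun ω => exp (l * Z (t + 1) ω)|𝓕 t] ω ≤ exp (-c) * exp c :=
        mul_le_mul_of_nonneg_left hω (exp_pos _).le
    _ = 1 := by rw [← exp_add, neg_add_cancel, exp_zero]

end ExpProcess

theorem uniform_subgaussian_tail_bound_general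
    {Ω : Type*} {m0 : MeasurableSpace Ω} (μ : Measure Ω) [IsProbabilityMeasure μ]
    (𝓕 : Filtration ℕ m0) (Z : ℕ → Ω → ℝ) (σ : ℝ)
    (hadapted : Adapted 𝓕 Z)
    (hint : ∀ (p : ℕ) (l : ℝ), Integrable (fun ω => Real.exp (l * Z p ω)) μ)
    (hcond : ∀ p : ℕ, 1 ≤ p → ∀ l : ℝ,
      μ[fun ω => Real.exp (l * Z p ω)|𝓕 (p - 1)] ≤ᵐ[μ]
        fun _ => Real.exp (l ^ 2 * σ ^ 2 / 2))
    (l : ℝ) (hl : 0 < l) (δ : ℝ) (hδ : δ ∈ Set.Ioo (0 : ℝ) 1) :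
    ENNReal.ofReal (1 - δ) ≤
      μ {ω | ∀ t : ℕ, 1 ≤ t →
        ∑ p ∈ Finset.Icc 1 t, Z p ω <
          (1 / l) * Real.log (1 / δ) + l * (t : ℝ) * σ ^ 2 / 2} := by
  set M := expProcess Z l (l ^ 2 * σ ^ 2 / 2)
  have hδ0 : 0 < δ := hδ.1
  have hM : Supermartingale M 𝓕 μ :=
    supermartingale_expProcess hadapted (fun t => hint (t + 1) l)
      fun t => hcond (t + 1) (Nat.le_add_left 1 t) l
  have hville : μ {ω | ∃ t, 1 / δ ≤ M t ω} ≤ ENNReal.ofReal δ := by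
    refine (hM.measure_exists_ge_le (fun t ω => (exp_pos _).le) (one_div_pos.2 hδ0)).trans_eq ?_
    simp [M, expProcess_zero]
  have hcrossing : ∀ (t : ℕ) ω, (1 / l) * log (1 / δ) + l * (t : ℝ) * σ ^ 2 / 2 ≤
      ∑ p ∈ Icc 1 t, Z p ω → 1 / δ ≤ M t ω := by
    intro t ω ht
    refine (exp_log (one_div_pos.2 hδ0)).symm.le.trans (exp_le_exp.2 ?_)
    have := mul_le_mul_of_nonneg_left ht hl.le
    field_simp at this ⊢
    linarith
  rw [ENNReal.ofReal_sub _ hδ0.le, ENNReal.ofReal_one]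
  refine one_sub_le_prob_of_prob_compl_le ((measure_mono fun ω hω => ?_).trans hville)
  simp only [Set.mem_compl_iff, Set.mem_ofPred_eq, not_forall, not_lt] at hω
  obtain ⟨t, -, ht⟩ := hω
  exact ⟨t, hcrossing t ω ht⟩

/-- **Uniform-in-time tail bound for sums of conditionally subgaussian increments**
(Lemma 7 of Russo–Van Roy). If `(Z p)_{p ≥ 1}` is adapted to the filtration `𝓕`
and conditionally `σ`-subgaussian given `𝓕`, then for any `l > 0` and `δ ∈ (0,1)`,
with probability at least `1 - δ`, simultaneously for all `t ≥ 1`,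
`S t < (1/l) log (1/δ) + l t σ² / 2` where `S t = ∑_{p=1}^t Z p`. -/
theorem uniform_subgaussian_tail_bound
    {Ω : Type*} {m0 : MeasurableSpace Ω} (μ : Measure Ω) [IsProbabilityMeasure μ]
    (𝓕 : Filtration ℕ m0) (Z : ℕ → Ω → ℝ) (σ : ℝ) (hσ : 0 ≤ σ)
    (hadapted : Adapted 𝓕 Z)
    (hint : ∀ (p : ℕ) (l : ℝ), Integrable (fun ω => Real.exp (l * Z p ω)) μ)
    (hcond : ∀ p : ℕ, 1 ≤ p → ∀ l : ℝ,
      μ[fun ω => Real.exp (l * Z p ω)|𝓕 (p - 1)] ≤ᵐ[μ]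
        fun _ => Real.exp (l ^ 2 * σ ^ 2 / 2))
    (l : ℝ) (hl : 0 < l) (δ : ℝ) (hδ : δ ∈ Set.Ioo (0 : ℝ) 1) :
    ENNReal.ofReal (1 - δ) ≤
      μ {ω | ∀ t : ℕ, 1 ≤ t →
        ∑ p ∈ Finset.Icc 1 t, Z p ω <
          (1 / l) * Real.log (1 / δ) + l * (t : ℝ) * σ ^ 2 / 2} :=
  uniform_subgaussian_tail_bound_general μ 𝓕 Z σ hadapted hint hcond l hl δ hδ
end

section
/- Let 𝒮 be a measurable space and 𝒜 a nonempty finite action set, let r : 𝒮 × 𝒜 → [0,1] be a measurable reward function and H ≥ 1 a horizon. For a transition model P̃ (a Markov kernel assigning to each (s,a) a probability measure P̃_a(s) on 𝒮), define its optimal value functions backward by Q_{H+1} = 0, V_h(s) = max_{a∈𝒜} Q_h(s,a), Q_h(s,a) = r(s,a) + ⟨P̃_a(s), V_{h+1}⟩, where ⟨μ, v⟩ = ∫ v dμ. Let P be the true transition model, let B be a set of transition models with P ∈ B, let P^k ∈ B with optimal value functions (V_{h,k})_{h} and Q-functions (Q_{h,k})_h, and suppose V*₁(s₁) ≤ V_{1,k}(s₁),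 where V* denotes the optimal value functions of P. Let s₁, …, s_H ∈ 𝒮 be any trajectory and let a_h ∈ argmax_{a∈𝒜} Q_{h,k}(s_h, a) for each h, and let π_k be the nonstationary Markov policy that is greedy with respect to (Q_{h,k})_h, with values V^{π_k}_h defined by V^{π_k}_{H+1} = 0 and V^{π_k}_h(s) = r(s, π_{k,h}(s)) + ⟨P_{π_{k,h}(s)}(s), V^{π_k}_{h+1}⟩. Then: V*₁(s₁) − V^{π_k}₁(s₁) ≤ sup_{P̃∈B} Σ_{h=1}^{H−1} ⟨ P̃_{a_h}(s_h) − P_{a_h}(s_h), V_{h+1,k} ⟩ + Σ_{h=1}^{H−1} ξ_{h+1,k}, where ξ_{h+1,k} = ⟨ P_{a_h}(s_h), V_{h+1,k} − V^{π_k}_{h+1} ⟩ − ( V_{h+1,k}(s_{h+1}) − V^{π_k}_{h+1}(s_{h+1}) ). -/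
/-!
Along the trajectory, write `Δ h = Vk h (s h) - Vπ h (s h)`. Both policies play `a h` at step `h`
(the greedy action attains the maximum in `Vk h`), so the rewards cancel in the Bellman equations
and `Δ h = ⟨Pk, Vk (h+1)⟩ - ⟨P, Vπ (h+1)⟩ = ⟨Pk - P, Vk (h+1)⟩ + ξ (h+1) + Δ (h+1)`.
Telescoping down to `Δ (H+1) = 0` expresses `Δ 1` as the sum of the model biases plus the sum of
the `ξ` (the terms at step `H` vanish). Optimism bounds the regret by `Δ 1`, and the bias sum for
`Pk ∈ B` is at most its supremum over `B`.
-/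

open MeasureTheory Finset

lemma ciSup_eq_of_forall_le {ι α : Type*} [ConditionallyCompleteLattice α] {f : ι → α} {i : ι}
    (h : ∀ j, f j ≤ f i) : ⨆ j, f j = f i :=
  haveI : Nonempty ι := ⟨i⟩
  le_antisymm (ciSup_le h) (le_ciSup ⟨f i, Set.forall_mem_range.2 h⟩ i)

lemma eq_sum_Icc_add_of_forall_eq_add {M : Type*} [AddCommGroup M] {d g : ℕ → M} {a b : ℕ}
    (hab : a ≤ b + 1) (hstep : ∀ i ∈ Icc a b, d i = g i + d (i + 1)) :
    d a = ∑ i ∈ Icc a b, g i + d (b + 1) := by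
  have hg : ∀ i ∈ Ico a (b + 1), g i = -(d (i + 1) - d i) := fun i hi => by
    rw [Ico_add_one_right_eq_Icc] at hi
    rw [hstep i hi]
    abel
  rw [← Ico_add_one_right_eq_Icc, sum_congr rfl hg, sum_neg_distrib, sum_Ico_sub d hab]
  abel

lemma sum_Icc_sub_one_right_of_eq_zero {M : Type*} [AddCommMonoid M] {g : ℕ → M} {a b : ℕ}
    (hg : g b = 0) : ∑ i ∈ Icc a (b - 1), g i = ∑ i ∈ Icc a b, g i :=
  sum_subset (Icc_subset_Icc_right (Nat.sub_le b 1)) fun i hi hi' => by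
    obtain rfl : i = b := by
      simp only [mem_Icc] at hi hi'
      omega
    exact hg

lemma integral_le_of_abs_le {α : Type*} [MeasurableSpace α] {μ : Measure α}
    [IsProbabilityMeasure μ] {f : α → ℝ} {C : ℝ} (h : ∀ x, |f x| ≤ C) : ∫ x, f x ∂μ ≤ C :=
  calc ∫ x, f x ∂μ ≤ ‖∫ x, f x ∂μ‖ := Real.le_norm_self _
    _ ≤ C * μ.real Set.univ := norm_integral_le_of_norm_le_const (ae_of_all _ h)
    _ = C := by simp

section Episode

variable {S A : Type*} [MeasurableSpace S]

lemma bddAbove_sum_integral_sub {B : Set (S → A → Measure S)}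
    (hB : ∀ Pt ∈ B, ∀ s a, IsProbabilityMeasure (Pt s a)) {V : ℕ → S → ℝ} {C : ℝ}
    (hV : ∀ h s, |V h s| ≤ C) (P : S → A → Measure S) (st : ℕ → S) (act : ℕ → A)
    (I : Finset ℕ) :
    BddAbove {w : ℝ | ∃ Pt ∈ B, w = ∑ h ∈ I,
      ((∫ y, V (h + 1) y ∂(Pt (st h) (act h))) - ∫ y, V (h + 1) y ∂(P (st h) (act h)))} := by
  refine ⟨∑ h ∈ I, (C - ∫ y, V (h + 1) y ∂(P (st h) (act h))), ?_⟩
  rintro _ ⟨Pt, hPt, rfl⟩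
  refine sum_le_sum fun h _ => sub_le_sub_right ?_ _
  have := hB Pt hPt (st h) (act h)
  exact integral_le_of_abs_le (hV (h + 1))

lemma value_gap_eq_sum {H : ℕ} {P Pk : S → A → Measure S} {Vk Vπ : ℕ → S → ℝ}
    {st : ℕ → S} {act : ℕ → A}
    (hVkTop : ∀ s, Vk (H + 1) s = 0) (hVπTop : ∀ s, Vπ (H + 1) s = 0)
    (hbellman : ∀ h ∈ Icc 1 H, Vk h (st h) - Vπ h (st h) =
      (∫ y, Vk (h + 1) y ∂(Pk (st h) (act h))) - ∫ y, Vπ (h + 1) y ∂(P (st h) (act h)))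
    (hVkInt : ∀ h, Integrable (Vk (h + 1)) (P (st h) (act h)))
    (hVπInt : ∀ h, Integrable (Vπ (h + 1)) (P (st h) (act h))) :
    Vk 1 (st 1) - Vπ 1 (st 1) =
      ∑ h ∈ Icc 1 (H - 1), ((∫ y, Vk (h + 1) y ∂(Pk (st h) (act h))) -
          ∫ y, Vk (h + 1) y ∂(P (st h) (act h))) +
        ∑ h ∈ Icc 1 (H - 1),
          ((∫ y, (Vk (h + 1) y - Vπ (h + 1) y) ∂(P (st h) (act h))) -
            (Vk (h + 1) (st (h + 1)) - Vπ (h + 1) (st (h + 1)))) := by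
  rw [← sum_add_distrib, sum_Icc_sub_one_right_of_eq_zero (by simp [hVkTop, hVπTop])]
  have htelescope := eq_sum_Icc_add_of_forall_eq_add (d := fun h => Vk h (st h) - Vπ h (st h))
    (g := fun h => ((∫ y, Vk (h + 1) y ∂(Pk (st h) (act h))) -
          ∫ y, Vk (h + 1) y ∂(P (st h) (act h))) +
        ((∫ y, (Vk (h + 1) y - Vπ (h + 1) y) ∂(P (st h) (act h))) -
          (Vk (h + 1) (st (h + 1)) - Vπ (h + 1) (st (h + 1)))))
    (Nat.le_add_left 1 H) fun h hh => by
      simp only [hbellman h hh, integral_sub (hVkInt h) (hVπInt h)]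
      ring
  simpa only [hVkTop, hVπTop, sub_zero, add_zero] using htelescope

end Episode

theorem optimistic_regret_decomposition_general
    {S : Type*} [MeasurableSpace S] {A : Type*}
    (r : S → A → ℝ)
    (H : ℕ)
    (P : S → A → Measure S) (hP : ∀ s a, IsProbabilityMeasure (P s a))
    (B : Set (S → A → Measure S))
    (hBprob : ∀ Pt ∈ B, ∀ (s : S) (a : A), IsProbabilityMeasure (Pt s a))
    (Pk : S → A → Measure S) (hPkB : Pk ∈ B)
    -- optimal value functions of the true model `P`
    (Vstar : ℕ → S → ℝ)
    -- optimal value functions of the optimistic model `Pk`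
    (Qk : ℕ → S → A → ℝ) (Vk : ℕ → S → ℝ)
    (hQkTop : ∀ s a, Qk (H + 1) s a = 0)
    (hVk : ∀ h s, Vk h s = ⨆ a : A, Qk h s a)
    (hQk : ∀ h, 1 ≤ h → h ≤ H → ∀ s a,
      Qk h s a = r s a + ∫ y, Vk (h + 1) y ∂(Pk s a))
    (hVkMeas : ∀ h, Measurable (Vk h))
    (hVkBdd : ∀ h s, |Vk h s| ≤ H)
    -- the greedy policy `πk` and its value functions under the true model
    (πk : ℕ → S → A)
    (hgreedy : ∀ h s, ∀ a : A, Qk h s a ≤ Qk h s (πk h s))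
    (Vπ : ℕ → S → ℝ)
    (hVπTop : ∀ s, Vπ (H + 1) s = 0)
    (hVπ : ∀ h, 1 ≤ h → h ≤ H → ∀ s,
      Vπ h s = r s (πk h s) + ∫ y, Vπ (h + 1) y ∂(P s (πk h s)))
    (hVπMeas : ∀ h, Measurable (Vπ h))
    (hVπBdd : ∀ h s, |Vπ h s| ≤ H)
    -- the trajectory and its greedy actions
    (st : ℕ → S) (act : ℕ → A) (hact : ∀ h, act h = πk h (st h))
    -- optimism
    (hopt : Vstar 1 (st 1) ≤ Vk 1 (st 1)) :
    Vstar 1 (st 1) - Vπ 1 (st 1) ≤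
      sSup {w : ℝ | ∃ Pt ∈ B, w = ∑ h ∈ Finset.Icc 1 (H - 1),
          ((∫ y, Vk (h + 1) y ∂(Pt (st h) (act h))) -
            ∫ y, Vk (h + 1) y ∂(P (st h) (act h)))} +
        ∑ h ∈ Finset.Icc 1 (H - 1),
          ((∫ y, (Vk (h + 1) y - Vπ (h + 1) y) ∂(P (st h) (act h))) -
            (Vk (h + 1) (st (h + 1)) - Vπ (h + 1) (st (h + 1)))) := by
  have hVk_greedy : ∀ h s, Vk h s = Qk h s (πk h s) := fun h s =>
    (hVk h s).trans (ciSup_eq_of_forall_le (hgreedy h s))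
  have hint : ∀ {V : ℕ → S → ℝ}, (∀ h, Measurable (V h)) → (∀ h s, |V h s| ≤ H) →
      ∀ h, Integrable (V (h + 1)) (P (st h) (act h)) := fun hmeas hbdd h =>
    have := hP (st h) (act h)
    .of_bound (hmeas (h + 1)).aestronglyMeasurable H (ae_of_all _ (hbdd (h + 1)))
  have hgap := value_gap_eq_sum (fun s => by rw [hVk_greedy, hQkTop]) hVπTop
    (fun h hh => by
      rw [mem_Icc] at hh
      rw [hVk_greedy, hQk h hh.1 hh.2, hVπ h hh.1 hh.2, ← hact]
      ring)
    (hint hVkMeas hVkBdd) (hint hVπMeas hVπBdd)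
  calc Vstar 1 (st 1) - Vπ 1 (st 1) ≤ Vk 1 (st 1) - Vπ 1 (st 1) := sub_le_sub_right hopt _
    _ = _ := hgap
    _ ≤ _ := add_le_add_left
      (le_csSup (bddAbove_sum_integral_sub hBprob hVkBdd P st act _) ⟨Pk, hPkB, rfl⟩) _

/-- **Optimism-based regret decomposition for a single episode**
(Lemma 1 in the paper). Let `P` be the true transition model, `B` a set of
transition models containing `P`, and `Pk ∈ B` an (optimistic) model whose
optimal value functions `Vk, Qk` satisfy `V*₁ (s₁) ≤ Vk 1 (s₁)` where
`V*` is the optimal value function of `P`. Let `πk` be greedy with respect to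
`Qk`, let `(s h)` be a trajectory with actions `a h = πk h (s h)` (so
`a h ∈ argmax Qk h (s h)`), and let `Vπ` be the value function of `πk` under
`P`. Then `V*₁ (s₁) - Vπ 1 (s₁)` is at most
`sup_{P̃ ∈ B} ∑_{h=1}^{H-1} ⟨P̃_{a h}(s h) - P_{a h}(s h), Vk (h+1)⟩`
plus the sum of the martingale differences
`ξ (h+1) = ⟨P_{a h}(s h), Vk (h+1) - Vπ (h+1)⟩ - (Vk (h+1) (s (h+1)) - Vπ (h+1) (s (h+1)))`. -/
theorem optimistic_regret_decomposition
    {S : Type*} [MeasurableSpace S] {A : Type*} [Fintype A] [Nonempty A]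
    (r : S → A → ℝ) (hr : ∀ s a, r s a ∈ Set.Icc (0 : ℝ) 1)
    (H : ℕ) (hH : 1 ≤ H)
    (P : S → A → Measure S) (hP : ∀ s a, IsProbabilityMeasure (P s a))
    (B : Set (S → A → Measure S))
    (hBprob : ∀ Pt ∈ B, ∀ (s : S) (a : A), IsProbabilityMeasure (Pt s a))
    (hPB : P ∈ B)
    (Pk : S → A → Measure S) (hPkB : Pk ∈ B)
    -- optimal value functions of the true model `P`
    (Qstar : ℕ → S → A → ℝ) (Vstar : ℕ → S → ℝ)
    (hQstarTop : ∀ s a, Qstar (H + 1) s a = 0)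
    (hVstar : ∀ h s, Vstar h s = ⨆ a : A, Qstar h s a)
    (hQstar : ∀ h, 1 ≤ h → h ≤ H → ∀ s a,
      Qstar h s a = r s a + ∫ y, Vstar (h + 1) y ∂(P s a))
    -- optimal value functions of the optimistic model `Pk`
    (Qk : ℕ → S → A → ℝ) (Vk : ℕ → S → ℝ)
    (hQkTop : ∀ s a, Qk (H + 1) s a = 0)
    (hVk : ∀ h s, Vk h s = ⨆ a : A, Qk h s a)
    (hQk : ∀ h, 1 ≤ h → h ≤ H → ∀ s a,
      Qk h s a = r s a + ∫ y, Vk (h + 1) y ∂(Pk s a))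
    (hVkMeas : ∀ h, Measurable (Vk h))
    (hVkBdd : ∀ h s, |Vk h s| ≤ H)
    -- the greedy policy `πk` and its value functions under the true model
    (πk : ℕ → S → A)
    (hgreedy : ∀ h s, ∀ a : A, Qk h s a ≤ Qk h s (πk h s))
    (Vπ : ℕ → S → ℝ)
    (hVπTop : ∀ s, Vπ (H + 1) s = 0)
    (hVπ : ∀ h, 1 ≤ h → h ≤ H → ∀ s,
      Vπ h s = r s (πk h s) + ∫ y, Vπ (h + 1) y ∂(P s (πk h s)))
    (hVπMeas : ∀ h, Measurable (Vπ h))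
    (hVπBdd : ∀ h s, |Vπ h s| ≤ H)
    -- the trajectory and its greedy actions
    (st : ℕ → S) (act : ℕ → A) (hact : ∀ h, act h = πk h (st h))
    -- optimism
    (hopt : Vstar 1 (st 1) ≤ Vk 1 (st 1)) :
    Vstar 1 (st 1) - Vπ 1 (st 1) ≤
      sSup {w : ℝ | ∃ Pt ∈ B, w = ∑ h ∈ Finset.Icc 1 (H - 1),
          ((∫ y, Vk (h + 1) y ∂(Pt (st h) (act h))) -
            ∫ y, Vk (h + 1) y ∂(P (st h) (act h)))} +
        ∑ h ∈ Finset.Icc 1 (H - 1),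
          ((∫ y, (Vk (h + 1) y - Vπ (h + 1) y) ∂(P (st h) (act h))) -
            (Vk (h + 1) (st (h + 1)) - Vπ (h + 1) (st (h + 1)))) :=
  optimistic_regret_decomposition_general r H P hP B hBprob Pk hPkB Vstar Qk Vk hQkTop hVk hQk
    hVkMeas hVkBdd πk hgreedy Vπ hVπTop hVπ hVπMeas hVπBdd st act hact hopt
end
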